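/- Let f̃(z) = 3.3957·(1−z)·exp(∫ᶻ¹ F̃(w) dw) where F̃(z) = −(z⁶ + 7z⁴ + 12z³ − 9z² − 4z + 1)/((z+1)(z²+1)(z²+2z−1)(z²−2z−1)). Then f̃ is strictly decreasing on [z₀, 1], where z₀ = √(−2 + √5). -/

import Mathlib

noncomputable def Ftilde (z : ℝ) : ℝ :=
  -(z ^ 6 + 7 * z ^ 4 + 12 * z ^ 3 - 9 * z ^ 2 - 4 * z + 1) /
    ((z + 1) * (z ^ 2 + 1) * (z ^ 2 + 2 * z - 1) * (z ^ 2 - 2 * z - 1))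

noncomputable def ftilde (z : ℝ) : ℝ :=
  3.3957 * (1 - z) * Real.exp (∫ w in z..1, Ftilde w)

/-!
Differentiating under the integral, `f̃' = 3.3957 · exp(∫ᶻ¹ F̃) · (-1 - (1 - z) F̃(z))`, so the sign of
`f̃'` is that of `-1 - (1 - z) F̃(z)`. Clearing the denominator `D` of `F̃`, which is negative on
`[z₀, 1]`, this reduces to the polynomial identity
`D(z) - (1 - z) N(z) = 2 z (z² - 3) (z⁴ + 4 z² - 1)`, where `F̃ = -N / D`, and `z₀` is exactly the
positive root of the last factor.
-/

open Real Set

theorem hasDerivAt_mul_sub_mul_exp_integral {F : ℝ → ℝ} {U : Set ℝ} {a b : ℝ} (c : ℝ)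
    (hU : IsOpen U) (hF : ContinuousOn F U) (hab : uIcc a b ⊆ U) :
    HasDerivAt (fun z => c * (b - z) * exp (∫ w in z..b, F w))
      (c * exp (∫ w in a..b, F w) * (-1 - (b - a) * F a)) a := by
  have ha : a ∈ U := hab left_mem_uIcc
  have hI : HasDerivAt (fun z => ∫ w in z..b, F w) (-F a) a :=
    intervalIntegral.integral_hasDerivAt_left ((hF.mono hab).intervalIntegrable)
      (hF.stronglyMeasurableAtFilter hU a ha) (hF.continuousAt (hU.mem_nhds ha))
  have hlin : HasDerivAt (fun z => c * (b - z)) (-c) a := by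
    simpa using ((hasDerivAt_id a).const_sub b).const_mul c
  exact (hlin.mul hI.exp).congr_deriv (by ring)

noncomputable def FtildeDen (z : ℝ) : ℝ :=
  (z + 1) * (z ^ 2 + 1) * (z ^ 2 + 2 * z - 1) * (z ^ 2 - 2 * z - 1)

noncomputable def FtildeNum (z : ℝ) : ℝ :=
  z ^ 6 + 7 * z ^ 4 + 12 * z ^ 3 - 9 * z ^ 2 - 4 * z + 1

theorem Ftilde_eq_neg_div (z : ℝ) : Ftilde z = -FtildeNum z / FtildeDen z := rfl

theorem FtildeDen_sub_mul_FtildeNum (z : ℝ) :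
    FtildeDen z - (1 - z) * FtildeNum z = 2 * z * (z ^ 2 - 3) * (z ^ 4 + 4 * z ^ 2 - 1) := by
  unfold FtildeDen FtildeNum
  ring

theorem continuousOn_Ftilde : ContinuousOn Ftilde {z | FtildeDen z ≠ 0} := by
  intro z hz
  exact (ContinuousAt.div (by fun_prop) (by unfold FtildeDen; fun_prop) hz).continuousWithinAt

theorem isOpen_FtildeDen_ne_zero : IsOpen {z | FtildeDen z ≠ 0} :=
  isOpen_ne_fun (by unfold FtildeDen; fun_prop) continuous_const

local notation "z₀" => Real.sqrt (-2 + Real.sqrt 5)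

theorem z₀_sq : z₀ ^ 2 = -2 + √5 := by
  have : 2 < √5 := by rw [Real.lt_sqrt] <;> norm_num
  exact Real.sq_sqrt (by linarith)

theorem z₀_quartic : z₀ ^ 4 + 4 * z₀ ^ 2 - 1 = 0 := by
  have h5 : √5 ^ 2 = 5 := Real.sq_sqrt (by norm_num)
  nlinarith [z₀_sq]

-- `0.48` exceeds `√2 - 1`, the root of the factor `z² + 2z - 1` of the denominator.
theorem z₀_bounds : 0.48 < z₀ ∧ z₀ < 1 := by
  have h5 : (2.2304 : ℝ) < √5 := by rw [Real.lt_sqrt] <;> norm_num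
  have h5' : √5 < 3 := by rw [Real.sqrt_lt'] <;> norm_num
  constructor
  · rw [Real.lt_sqrt] <;> linarith
  · rw [Real.sqrt_lt'] <;> linarith

theorem FtildeDen_neg {z : ℝ} (hz : z ∈ Icc z₀ 1) : FtildeDen z < 0 := by
  obtain ⟨h₀, h₁⟩ := hz
  have hz : 0.48 < z := z₀_bounds.1.trans_le h₀
  unfold FtildeDen
  have hpos : 0 < (z + 1) * (z ^ 2 + 1) * (z ^ 2 + 2 * z - 1) := by
    have : 0 < z ^ 2 + 2 * z - 1 := by nlinarith
    positivity
  exact mul_neg_of_pos_of_neg hpos (by nlinarith)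

theorem quartic_pos_of_z₀_lt {z : ℝ} (hz : z₀ < z) : 0 < z ^ 4 + 4 * z ^ 2 - 1 := by
  have h0 : 0 < z₀ := by linarith [z₀_bounds.1]
  have hsq : z₀ ^ 2 < z ^ 2 := by nlinarith
  nlinarith [z₀_quartic]

theorem neg_one_sub_mul_Ftilde_neg {z : ℝ} (h₀ : z₀ < z) (h₁ : z < 1) :
    -1 - (1 - z) * Ftilde z < 0 := by
  have hD := FtildeDen_neg ⟨h₀.le, h₁.le⟩
  have hz : 0 < z := by linarith [z₀_bounds.1]
  have hpoly : 2 * z * (z ^ 2 - 3) * (z ^ 4 + 4 * z ^ 2 - 1) < 0 :=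
    mul_neg_of_neg_of_pos (mul_neg_of_pos_of_neg (by positivity) (by nlinarith))
      (quartic_pos_of_z₀_lt h₀)
  have hmul : (-1 - (1 - z) * Ftilde z) * FtildeDen z = -(FtildeDen z - (1 - z) * FtildeNum z) := by
    rw [Ftilde_eq_neg_div]
    field_simp [hD.ne]
    ring
  rw [FtildeDen_sub_mul_FtildeNum] at hmul
  exact neg_of_mul_pos_left (by linarith) hD.le

theorem hasDerivAt_ftilde {z : ℝ} (hz : z ∈ Icc z₀ 1) :
    HasDerivAt ftilde (3.3957 * exp (∫ w in z..1, Ftilde w) * (-1 - (1 - z) * Ftilde z)) z := by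
  refine hasDerivAt_mul_sub_mul_exp_integral _ isOpen_FtildeDen_ne_zero continuousOn_Ftilde ?_
  rw [uIcc_of_le hz.2]
  exact fun w hw => (FtildeDen_neg ⟨hz.1.trans hw.1, hw.2⟩).ne

theorem stmt_6 : StrictAntiOn ftilde (Set.Icc (Real.sqrt (-2 + Real.sqrt 5)) 1) := by
  refine strictAntiOn_of_deriv_neg (convex_Icc _ _)
    (fun z hz => (hasDerivAt_ftilde hz).continuousAt.continuousWithinAt) fun z hz => ?_
  rw [interior_Icc] at hz
  rw [(hasDerivAt_ftilde (Ioo_subset_Icc_self hz)).deriv]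
  exact mul_neg_of_pos_of_neg (by positivity) (neg_one_sub_mul_Ftilde_neg hz.1 hz.2)
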